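/- Preservation of precision for value stores: if (r̂, σ̂) is a fixed point of ⤳̂Ξ, wf(ξ̃, (r̃, σ̃, σ̃κ)), (r̃, σ̃, σ̃κ) ⤳̃Ξ (r̃', σ̃', σ̃′κ), and (r̂, σ̂) ⊒Ξ (r̃, σ̃, σ̃κ), then σ̂ ⊒Store σ̃', i.e., the unbounded-stack value store still bounds the stepped finite-state value store, under Assumptions 1–3. (Lemma: Preservation of precision for value stores.) -/
import Mathlib


/-!
Formalization of the P4F ("Pushdown Control-Flow Analysis for Free") framework:
ANF λ-calculus syntax, the finite-state abstract machine with store-allocated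
continuations (P4F continuation allocator), the store-widened analysis, the
unbounded-stack abstract machine and its widened analysis, implied stacks,
sub-step relations, finite-state and unbounded-stack paths, well-formedness,
conversion functions induced by an address bijection, and the precision
relations.
-/

namespace P4F

/-! ANF syntax: expressions, atomic expressions, lambdas. -/
mutual
inductive Exp (Var : Type) : Type where
  | letCall (y : Var) (f : AExp Var) (ae : AExp Var) (body : Exp Var)
  | ret (ae : AExp Var)
inductive AExp (Var : Type) : Type where
  | var (x : Var)
  | lam (l : Lam Var)
inductive Lam (Var : Type) : Type where
  | mk (x : Var) (body : Exp Var)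
end

variable {Var Addr HAddr : Type}

/-- Pointwise containment of set-valued stores. -/
def SubStore {A B : Type} (σ σ' : A → Set B) : Prop := ∀ a, σ a ⊆ σ' a

open Classical in
/-- Join a set-valued store with a single-point store: `σ ⊔ [a ↦ d]`. -/
noncomputable def joinOne {A B : Type} (σ : A → Set B) (a : A) (d : Set B) : A → Set B :=
  fun a' => if a' = a then σ a' ∪ d else σ a'

/-- Binding environments: partial maps from variables to addresses. -/
abbrev EnvF (Var Addr : Type) : Type := Var → Option Addr
/-- Abstract closures. -/
abbrev CloF (Var Addr : Type) : Type := Lam Var × EnvF Var Addr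
/-- Value stores. -/
abbrev StoreF (Var Addr : Type) : Type := Addr → Set (CloF Var Addr)
/-- Stack frames. -/
abbrev FrameF (Var Addr : Type) : Type := Var × Exp Var × EnvF Var Addr
/-- Continuation addresses for the P4F allocator: either the halt address
    (`none`) or a pair of a target expression and environment. -/
abbrev KAddrF (Var Addr : Type) : Type := Option (Exp Var × EnvF Var Addr)
/-- Continuations: a topmost frame paired with the address of the rest of the stack. -/
abbrev KontF (Var Addr : Type) : Type := FrameF Var Addr × KAddrF Var Addr
/-- Continuation stores. -/
abbrev KStoreF (Var Addr : Type) : Type := KAddrF Var Addr → Set (KontF Var Addr)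

def emptyEnv : EnvF Var Addr := fun _ => none
def botStore : StoreF Var Addr := fun _ => ∅
def botKStore : KStoreF Var Addr := fun _ => ∅
/-- The distinguished halt continuation address. -/
def ahalt : KAddrF Var Addr := none

open Classical in
/-- Environment extension `ρ[x ↦ a]`. -/
noncomputable def upd (ρ : EnvF Var Addr) (x : Var) (a : Addr) : EnvF Var Addr :=
  fun y => if y = x then some a else ρ y

/-- Abstract atomic-expression evaluation. -/
def aeval : AExp Var → EnvF Var Addr → StoreF Var Addr → Set (CloF Var Addr)
  | AExp.var x, ρ, σ =>
    match ρ x with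
    | some a => σ a
    | none => ∅
  | AExp.lam l, ρ, _ => {(l, ρ)}

/-- Finite-state machine states `ς̃ = (e, ρ̃, σ̃, σ̃κ, ãκ)`. -/
structure StateF (Var Addr : Type) : Type where
  e : Exp Var
  ρ : EnvF Var Addr
  σ : StoreF Var Addr
  σκ : KStoreF Var Addr
  aκ : KAddrF Var Addr

/-- The finite-state transition relation `⤳̃Σ`, parametrized by the value
    allocator; the continuation allocator is the P4F allocator
    `alloc̃κ(ς̃, e', ρ̃', σ̃') = (e', ρ̃')`. -/
inductive StepF (alloc : Var → StateF Var Addr → Addr) :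
    StateF Var Addr → StateF Var Addr → Prop where
  | call {y x : Var} {f ae : AExp Var} {e e' : Exp Var} {ρ ρlam : EnvF Var Addr}
      {σ : StoreF Var Addr} {σκ : KStoreF Var Addr} {aκ : KAddrF Var Addr} :
      (Lam.mk x e', ρlam) ∈ aeval f ρ σ →
      StepF alloc ⟨Exp.letCall y f ae e, ρ, σ, σκ, aκ⟩
        ⟨e',
         upd ρlam x (alloc x ⟨Exp.letCall y f ae e, ρ, σ, σκ, aκ⟩),
         joinOne σ (alloc x ⟨Exp.letCall y f ae e, ρ, σ, σκ, aκ⟩) (aeval ae ρ σ),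
         joinOne σκ (some (e', upd ρlam x (alloc x ⟨Exp.letCall y f ae e, ρ, σ, σκ, aκ⟩)))
           {((y, e, ρ), aκ)},
         some (e', upd ρlam x (alloc x ⟨Exp.letCall y f ae e, ρ, σ, σκ, aκ⟩))⟩
  | ret {x : Var} {ae : AExp Var} {e : Exp Var} {ρ ρκ : EnvF Var Addr}
      {σ : StoreF Var Addr} {σκ : KStoreF Var Addr} {aκ aκ' : KAddrF Var Addr} :
      ((x, e, ρκ), aκ') ∈ σκ aκ →
      StepF alloc ⟨Exp.ret ae, ρ, σ, σκ, aκ⟩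
        ⟨e, upd ρκ x (alloc x ⟨Exp.ret ae, ρ, σ, σκ, aκ⟩),
         joinOne σ (alloc x ⟨Exp.ret ae, ρ, σ, σκ, aκ⟩) (aeval ae ρ σ),
         σκ, aκ'⟩

/-- Finite-state configurations `c̃ = (e, ρ̃, ãκ)`. -/
abbrev ConfF (Var Addr : Type) : Type := Exp Var × EnvF Var Addr × KAddrF Var Addr

/-- Widened state spaces `ξ̃ = (r̃, σ̃, σ̃κ)`. -/
structure XiF (Var Addr : Type) : Type where
  r : Set (ConfF Var Addr)
  σ : StoreF Var Addr
  σκ : KStoreF Var Addr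

def initConfF (e0 : Exp Var) : ConfF Var Addr := (e0, emptyEnv, ahalt)
def initStateF (e0 : Exp Var) : StateF Var Addr := ⟨e0, emptyEnv, botStore, botKStore, ahalt⟩
/-- The initial widened result `({(e₀, ∅, ã_halt)}, ⊥, ⊥)`. -/
def initXiF (e0 : Exp Var) : XiF Var Addr := ⟨{initConfF e0}, botStore, botKStore⟩

/-- The state obtained by pairing a configuration with the global stores. -/
def stateOfF (ξ : XiF Var Addr) (c : ConfF Var Addr) : StateF Var Addr :=
  ⟨c.1, c.2.1, ξ.σ, ξ.σκ, c.2.2⟩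

/-- The set `s̃` of all successors of the reachable configurations under the
    global stores, together with the injected initial state. -/
def succSetF (alloc : Var → StateF Var Addr → Addr) (e0 : Exp Var)
    (ξ : XiF Var Addr) : Set (StateF Var Addr) :=
  insert (initStateF e0) {ς' | ∃ c ∈ ξ.r, StepF alloc (stateOfF ξ c) ς'}

/-- The widened transfer relation `⤳̃Ξ`. -/
def XiStepF (alloc : Var → StateF Var Addr → Addr) (e0 : Exp Var)
    (ξ ξ' : XiF Var Addr) : Prop :=
  ξ'.r = {c | ∃ ς ∈ succSetF alloc e0 ξ, c = (ς.e, ς.ρ, ς.aκ)} ∧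
  ξ'.σ = (fun a => ⋃ ς ∈ succSetF alloc e0 ξ, ς.σ a) ∧
  ξ'.σκ = (fun aκ => ⋃ ς ∈ succSetF alloc e0 ξ, ς.σκ aκ)

/-- Implied stacks: `ψ̃ ∈ψ ãκ (via σ̃κ)`. -/
inductive Implied (σκ : KStoreF Var Addr) : KAddrF Var Addr → List (KontF Var Addr) → Prop where
  | halt : Implied σκ ahalt []
  | cons {φ : FrameF Var Addr} {aκ' aκ : KAddrF Var Addr} {ψ : List (KontF Var Addr)} :
      (φ, aκ') ∈ σκ aκ → Implied σκ aκ' ψ → aκ ≠ ahalt →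
      Implied σκ aκ ((φ, aκ') :: ψ)

/-- The finite-state sub-step relation `⤳⊑̃`. -/
def SubStepF (alloc : Var → StateF Var Addr → Addr) (ς ς' : StateF Var Addr) : Prop :=
  ∃ σ₁ σκ₁ σ₂ σκ₂,
    StepF alloc ⟨ς.e, ς.ρ, σ₁, σκ₁, ς.aκ⟩ ⟨ς'.e, ς'.ρ, σ₂, σκ₂, ς'.aκ⟩ ∧
    SubStore σ₁ ς.σ ∧ SubStore σκ₁ ς.σκ ∧ SubStore σ₂ ς'.σ ∧ SubStore σκ₂ ς'.σκ

/-- The finite-state sub-step relation `⤳⊑̃ (with ã, clo)`. -/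
def SubStepFWithClo (alloc : Var → StateF Var Addr → Addr) (ς ς' : StateF Var Addr)
    (a : Addr) (clo : CloF Var Addr) : Prop :=
  ∃ σ₁ σκ₁ σ₂ σκ₂,
    StepF alloc ⟨ς.e, ς.ρ, σ₁, σκ₁, ς.aκ⟩ ⟨ς'.e, ς'.ρ, σ₂, σκ₂, ς'.aκ⟩ ∧
    SubStore σ₁ ς.σ ∧ SubStore σκ₁ ς.σκ ∧ SubStore σ₂ ς'.σ ∧ SubStore σκ₂ ς'.σκ ∧
    clo ∈ σ₂ a

/-- The finite-state sub-step relation `⤳⊑̃ (with κ̃, ã''κ)`. -/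
def SubStepFWithKont (alloc : Var → StateF Var Addr → Addr) (ς ς' : StateF Var Addr)
    (aκ'' : KAddrF Var Addr) (κ : KontF Var Addr) : Prop :=
  ∃ σ₁ σκ₁ σ₂ σκ₂,
    StepF alloc ⟨ς.e, ς.ρ, σ₁, σκ₁, ς.aκ⟩ ⟨ς'.e, ς'.ρ, σ₂, σκ₂, ς'.aκ⟩ ∧
    SubStore σ₁ ς.σ ∧ SubStore σκ₁ ς.σκ ∧ SubStore σ₂ ς'.σ ∧ SubStore σκ₂ ς'.σκ ∧
    κ ∈ σκ₂ aκ''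

/-- Finite-state paths `(c̃, ψ̃) ↪̃ (c̃', ψ̃') (via ξ̃, ξ̃')`. -/
inductive PathF (alloc : Var → StateF Var Addr → Addr) (ξ ξ' : XiF Var Addr) :
    ConfF Var Addr × List (KontF Var Addr) →
    ConfF Var Addr × List (KontF Var Addr) → Prop where
  | refl {e : Exp Var} {ρ : EnvF Var Addr} {aκ : KAddrF Var Addr}
      {ψ : List (KontF Var Addr)} :
      (e, ρ, aκ) ∈ ξ'.r → Implied ξ'.σκ aκ ψ →
      PathF alloc ξ ξ' ((e, ρ, aκ), ψ) ((e, ρ, aκ), ψ)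
  | ret {c : ConfF Var Addr} {ψ₀ : List (KontF Var Addr)} {ae : AExp Var}
      {ρ'' ρκ : EnvF Var Addr} {aκ'' aκ' : KAddrF Var Addr} {x : Var} {e' : Exp Var}
      {ψ' : List (KontF Var Addr)} :
      PathF alloc ξ ξ' (c, ψ₀) ((Exp.ret ae, ρ'', aκ''), ((x, e', ρκ), aκ') :: ψ') →
      (Exp.ret ae, ρ'', aκ'') ∈ ξ.r →
      ((x, e', ρκ), aκ') ∈ ξ.σκ aκ'' →
      (e', upd ρκ x (alloc x ⟨Exp.ret ae, ρ'', ξ.σ, ξ.σκ, aκ''⟩), aκ') ∈ ξ'.r →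
      SubStepF alloc ⟨Exp.ret ae, ρ'', ξ.σ, ξ.σκ, aκ''⟩
        ⟨e', upd ρκ x (alloc x ⟨Exp.ret ae, ρ'', ξ.σ, ξ.σκ, aκ''⟩), ξ'.σ, ξ'.σκ, aκ'⟩ →
      PathF alloc ξ ξ' (c, ψ₀)
        ((e', upd ρκ x (alloc x ⟨Exp.ret ae, ρ'', ξ.σ, ξ.σκ, aκ''⟩), aκ'), ψ')
  | call {c : ConfF Var Addr} {ψ₀ : List (KontF Var Addr)} {x : Var}
      {f ae : AExp Var} {e'' e' : Exp Var} {ρ'' ρ' : EnvF Var Addr}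
      {aκ'' aκ' : KAddrF Var Addr} {ψ' : List (KontF Var Addr)} :
      PathF alloc ξ ξ' (c, ψ₀) ((Exp.letCall x f ae e'', ρ'', aκ''), ψ') →
      ((x, e'', ρ''), aκ'') ∈ ξ'.σκ aκ' →
      SubStepF alloc ⟨Exp.letCall x f ae e'', ρ'', ξ.σ, ξ.σκ, aκ''⟩
        ⟨e', ρ', ξ'.σ, ξ'.σκ, aκ'⟩ →
      PathF alloc ξ ξ' (c, ψ₀) ((e', ρ', aκ'), ((x, e'', ρ''), aκ'') :: ψ')

/-- `Entry` maps a continuation address to the entry-point configuration of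
    the function invocation whose configurations use that address. -/
def Entry (e0 : Exp Var) : KAddrF Var Addr → ConfF Var Addr
  | none => (e0, emptyEnv, ahalt)
  | some (eκ, ρκ) => (eκ, ρκ, some (eκ, ρκ))

/-- The non-recursive well-formedness sub-properties
    `wf_⊑ ∧ wf_init ∧ wf_halt ∧ wf_r̃ ∧ wf_σ̃ ∧ wf_σ̃κ`. -/
def WFRest (alloc : Var → StateF Var Addr → Addr) (e0 : Exp Var)
    (ξ ξ' : XiF Var Addr) : Prop :=
  (ξ.r ⊆ ξ'.r ∧ SubStore ξ.σ ξ'.σ ∧ SubStore ξ.σκ ξ'.σκ) ∧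
  (initConfF e0 ∈ ξ'.r) ∧
  (∀ κ : KontF Var Addr, κ ∉ ξ'.σκ ahalt) ∧
  (∀ c ∈ ξ'.r, ∃ ψ, Implied ξ'.σκ c.2.2 ψ ∧
      PathF alloc ξ ξ' (initConfF e0, []) (c, ψ)) ∧
  (∀ (a : Addr) (clo : CloF Var Addr), clo ∈ ξ'.σ a →
      ∃ c ∈ ξ.r, ∃ c' ∈ ξ'.r,
        SubStepFWithClo alloc (stateOfF ξ c) (stateOfF ξ' c') a clo) ∧
  (∀ (aκ' : KAddrF Var Addr) (x : Var) (e : Exp Var) (ρκ : EnvF Var Addr)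
      (aκ : KAddrF Var Addr), ((x, e, ρκ), aκ) ∈ ξ'.σκ aκ' →
      ∃ (eκ' : Exp Var) (ρκ' : EnvF Var Addr), aκ' = some (eκ', ρκ') ∧
        Entry e0 aκ' ∈ ξ'.r ∧
        ∃ (f ae : AExp Var), (Exp.letCall x f ae e, ρκ, aκ) ∈ ξ.r ∧
          SubStepFWithKont alloc ⟨Exp.letCall x f ae e, ρκ, ξ.σ, ξ.σκ, aκ⟩
            ⟨eκ', ρκ', ξ'.σ, ξ'.σκ, aκ'⟩ aκ' ((x, e, ρκ), aκ))

/-- Well-formedness `wf(ξ̃, ξ̃')`. -/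
inductive WF (alloc : Var → StateF Var Addr → Addr) (e0 : Exp Var) :
    XiF Var Addr → XiF Var Addr → Prop where
  | init :
      WFRest alloc e0 (initXiF e0) (initXiF e0) →
      WF alloc e0 (initXiF e0) (initXiF e0)
  | step {ξ'' ξ ξ' : XiF Var Addr} :
      WF alloc e0 ξ'' ξ → XiStepF alloc e0 ξ ξ' → WFRest alloc e0 ξ ξ' →
      WF alloc e0 ξ ξ'

/-! ### The unbounded-stack machine -/

/-- Unbounded-stack machine states `ς̂ = (e, ρ̂, σ̂, κ̂)`. -/
structure StateH (Var HAddr : Type) : Type where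
  e : Exp Var
  ρ : EnvF Var HAddr
  σ : StoreF Var HAddr
  κ : List (FrameF Var HAddr)

/-- The unbounded-stack transition relation `⤳̂Σ`. -/
inductive StepH (halloc : Var → StateH Var HAddr → HAddr) :
    StateH Var HAddr → StateH Var HAddr → Prop where
  | call {y x : Var} {f ae : AExp Var} {e e' : Exp Var} {ρ ρlam : EnvF Var HAddr}
      {σ : StoreF Var HAddr} {κ : List (FrameF Var HAddr)} :
      (Lam.mk x e', ρlam) ∈ aeval f ρ σ →
      StepH halloc ⟨Exp.letCall y f ae e, ρ, σ, κ⟩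
        ⟨e', upd ρlam x (halloc x ⟨Exp.letCall y f ae e, ρ, σ, κ⟩),
         joinOne σ (halloc x ⟨Exp.letCall y f ae e, ρ, σ, κ⟩) (aeval ae ρ σ),
         (y, e, ρ) :: κ⟩
  | ret {x : Var} {ae : AExp Var} {e : Exp Var} {ρ ρκ : EnvF Var HAddr}
      {σ : StoreF Var HAddr} {κ : List (FrameF Var HAddr)} :
      StepH halloc ⟨Exp.ret ae, ρ, σ, (x, e, ρκ) :: κ⟩
        ⟨e, upd ρκ x (halloc x ⟨Exp.ret ae, ρ, σ, (x, e, ρκ) :: κ⟩),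
         joinOne σ (halloc x ⟨Exp.ret ae, ρ, σ, (x, e, ρκ) :: κ⟩) (aeval ae ρ σ),
         κ⟩

/-- Unbounded-stack configurations `ĉ = (e, ρ̂, κ̂)`. -/
abbrev ConfH (Var HAddr : Type) : Type := Exp Var × EnvF Var HAddr × List (FrameF Var HAddr)

/-- Unbounded-stack widened state spaces `ξ̂ = (r̂, σ̂)`. -/
structure XiH (Var HAddr : Type) : Type where
  r : Set (ConfH Var HAddr)
  σ : StoreF Var HAddr

def initConfH (e0 : Exp Var) : ConfH Var HAddr := (e0, emptyEnv, [])
def initStateH (e0 : Exp Var) : StateH Var HAddr := ⟨e0, emptyEnv, botStore, []⟩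

def succSetH (halloc : Var → StateH Var HAddr → HAddr) (e0 : Exp Var)
    (ξ : XiH Var HAddr) : Set (StateH Var HAddr) :=
  insert (initStateH e0) {ς' | ∃ c ∈ ξ.r, StepH halloc ⟨c.1, c.2.1, ξ.σ, c.2.2⟩ ς'}

/-- The unbounded-stack widened transfer relation `⤳̂Ξ`. -/
def XiStepH (halloc : Var → StateH Var HAddr → HAddr) (e0 : Exp Var)
    (ξ ξ' : XiH Var HAddr) : Prop :=
  ξ'.r = {c | ∃ ς ∈ succSetH halloc e0 ξ, c = (ς.e, ς.ρ, ς.κ)} ∧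
  ξ'.σ = (fun a => ⋃ ς ∈ succSetH halloc e0 ξ, ς.σ a)

/-- The unbounded-stack sub-step relation `⤳⊑̂`. -/
def SubStepH (halloc : Var → StateH Var HAddr → HAddr) (ς ς' : StateH Var HAddr) : Prop :=
  ∃ σ₂, StepH halloc ⟨ς.e, ς.ρ, ς.σ, ς.κ⟩ ⟨ς'.e, ς'.ρ, σ₂, ς'.κ⟩ ∧ SubStore σ₂ ς'.σ

/-- Unbounded-stack paths `ĉ ↪̂ ĉ' (via r̂, σ̂)`. -/
inductive PathH (halloc : Var → StateH Var HAddr → HAddr)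
    (rH : Set (ConfH Var HAddr)) (σH : StoreF Var HAddr) :
    ConfH Var HAddr → ConfH Var HAddr → Prop where
  | refl (c : ConfH Var HAddr) : PathH halloc rH σH c c
  | step {c c' : ConfH Var HAddr} {e' : Exp Var} {ρ' : EnvF Var HAddr}
      {κ' : List (FrameF Var HAddr)} :
      PathH halloc rH σH c c' →
      SubStepH halloc ⟨c'.1, c'.2.1, σH, c'.2.2⟩ ⟨e', ρ', σH, κ'⟩ →
      PathH halloc rH σH c (e', ρ', κ')

/-! ### Conversions and precision relations (Assumption 1) -/

/-- `H_Env` induced by the address bijection. -/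
def HEnv (HA : Addr ≃ HAddr) (ρ : EnvF Var Addr) : EnvF Var HAddr :=
  fun x => (ρ x).map HA

/-- `H_Clo`. -/
def HClo (HA : Addr ≃ HAddr) (clo : CloF Var Addr) : CloF Var HAddr :=
  (clo.1, HEnv HA clo.2)

/-- `H_Frame`. -/
def HFrame (HA : Addr ≃ HAddr) (φ : FrameF Var Addr) : FrameF Var HAddr :=
  (φ.1, φ.2.1, HEnv HA φ.2.2)

/-- `H_Kont`: componentwise conversion of an implied stack into an unbounded stack. -/
def HKont (HA : Addr ≃ HAddr) (ψ : List (KontF Var Addr)) : List (FrameF Var HAddr) :=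
  ψ.map fun k => HFrame HA k.1

/-- `H_C`: conversion of a finite-state configuration with an implied stack
    into an unbounded-stack configuration. -/
def HC (HA : Addr ≃ HAddr) (c : ConfF Var Addr) (ψ : List (KontF Var Addr)) :
    ConfH Var HAddr :=
  (c.1, HEnv HA c.2.1, HKont HA ψ)

/-- Store precision `σ̂ ⊒Store σ̃`. -/
def StorePrec (HA : Addr ≃ HAddr) (σH : StoreF Var HAddr) (σ : StoreF Var Addr) : Prop :=
  ∀ (a : Addr) (clo : CloF Var Addr), clo ∈ σ a → HClo HA clo ∈ σH (HA a)

/-- Reachable-configurations precision `r̂ ⊒R r̃ (via σ̃κ)`. -/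
def RPrec (HA : Addr ≃ HAddr) (rH : Set (ConfH Var HAddr))
    (r : Set (ConfF Var Addr)) (σκ : KStoreF Var Addr) : Prop :=
  ∀ (e : Exp Var) (ρ : EnvF Var Addr) (aκ : KAddrF Var Addr)
    (ψ : List (KontF Var Addr)),
    (e, ρ, aκ) ∈ r → Implied σκ aκ ψ → (e, HEnv HA ρ, HKont HA ψ) ∈ rH

/-- State-space precision `ξ̂ ⊒Ξ ξ̃`. -/
def XiPrec (HA : Addr ≃ HAddr) (ξH : XiH Var HAddr) (ξ : XiF Var Addr) : Prop :=
  RPrec HA ξH.r ξ.r ξ.σκ ∧ StorePrec HA ξH.σ ξ.σ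

/-- Assumption 2 (allocation equivalence). -/
def AllocEquiv (HA : Addr ≃ HAddr) (alloc : Var → StateF Var Addr → Addr)
    (halloc : Var → StateH Var HAddr → HAddr) : Prop :=
  ∀ (x : Var) (e : Exp Var) (ρ : EnvF Var Addr) (σ : StoreF Var Addr)
    (σκ : KStoreF Var Addr) (aκ : KAddrF Var Addr) (σH : StoreF Var HAddr)
    (ψ : List (KontF Var Addr)),
    StorePrec HA σH σ → Implied σκ aκ ψ →
    halloc x ⟨e, HEnv HA ρ, σH, HKont HA ψ⟩ = HA (alloc x ⟨e, ρ, σ, σκ, aκ⟩)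

/-- Assumption 3 (allocation consistency). -/
def AllocConsistent (alloc : Var → StateF Var Addr → Addr) (e0 : Exp Var) : Prop :=
  ∀ (ξp ξ ξ' : XiF Var Addr) (e e' : Exp Var) (ρ ρ' : EnvF Var Addr)
    (aκ aκ' : KAddrF Var Addr) (σ'' : StoreF Var Addr) (σκ'' : KStoreF Var Addr)
    (x : Var),
    WF alloc e0 ξp ξ →
    StepF alloc ⟨e, ρ, ξ.σ, ξ.σκ, aκ⟩
      ⟨e', upd ρ' x (alloc x ⟨e, ρ, ξ.σ, ξ.σκ, aκ⟩), σ'', σκ'', aκ'⟩ →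
    XiStepF alloc e0 ξ ξ' →
    alloc x ⟨e, ρ, ξ.σ, ξ.σκ, aκ⟩ = alloc x ⟨e, ρ, ξ'.σ, ξ'.σκ, aκ⟩

end P4F

namespace P4F

lemma WF.rest {Var Addr : Type} {alloc : Var → StateF Var Addr → Addr} {e0 : Exp Var}
    {ξ ξ' : XiF Var Addr} (h : WF alloc e0 ξ ξ') : WFRest alloc e0 ξ ξ' := by
  cases h <;> assumption

lemma aeval_prec {Var Addr HAddr : Type} (HA : Addr ≃ HAddr)
    {σH : StoreF Var HAddr} {σ : StoreF Var Addr}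
    (hσ : StorePrec HA σH σ) (ae : AExp Var) (ρ : EnvF Var Addr)
    {clo : CloF Var Addr} (h : clo ∈ aeval ae ρ σ) :
    HClo HA clo ∈ aeval ae (HEnv HA ρ) σH := by
  cases ae with
  | var x =>
    cases hx : ρ x with
    | none => simp [aeval, hx] at h
    | some a =>
      simp only [aeval, hx] at h
      have : HEnv HA ρ x = some (HA a) := by simp [HEnv, hx]
      simp only [aeval, this]
      exact hσ a clo h
  | lam l =>
    simp only [aeval, Set.mem_singleton_iff] at h ⊢
    subst h; rfl

/-- **Preservation of precision for value stores** (Lemma 5).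
If `(r̂, σ̂)` is a fixed point of `⤳̂Ξ`, `wf(ξ̃, (r̃, σ̃, σ̃κ))`,
`(r̃, σ̃, σ̃κ) ⤳̃Ξ (r̃', σ̃', σ̃′κ)`, and `(r̂, σ̂) ⊒Ξ (r̃, σ̃, σ̃κ)`,
then `σ̂ ⊒Store σ̃'`. -/
theorem preservation_of_precision_for_value_stores
    {Var Addr HAddr : Type} (e0 : Exp Var)
    (alloc : Var → StateF Var Addr → Addr)
    (halloc : Var → StateH Var HAddr → HAddr)
    (HA : Addr ≃ HAddr)
    (hAllocEquiv : AllocEquiv HA alloc halloc)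
    (hAllocConsistent : AllocConsistent alloc e0)
    (rH : Set (ConfH Var HAddr)) (σH : StoreF Var HAddr)
    (hfix : XiStepH halloc e0 ⟨rH, σH⟩ ⟨rH, σH⟩)
    (ξ : XiF Var Addr) (r : Set (ConfF Var Addr)) (σ : StoreF Var Addr)
    (σκ : KStoreF Var Addr)
    (hwf : WF alloc e0 ξ ⟨r, σ, σκ⟩)
    (r' : Set (ConfF Var Addr)) (σ' : StoreF Var Addr) (σκ' : KStoreF Var Addr)
    (hstep : XiStepF alloc e0 ⟨r, σ, σκ⟩ ⟨r', σ', σκ'⟩)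
    (hprec : XiPrec HA ⟨rH, σH⟩ ⟨r, σ, σκ⟩) :
    StorePrec HA σH σ' := by
  obtain ⟨hwf1, hwf2, hwf3, hwf4, hwf5, hwf6⟩ := hwf.rest
  intro a clo hclo
  rw [show σ' = _ from hstep.2.1] at hclo
  simp only [Set.mem_iUnion, exists_prop] at hclo
  obtain ⟨ς, hς, hmem⟩ := hclo
  rcases hς with rfl | ⟨⟨ce, cρ, caκ⟩, hc, hstepF⟩
  · exact absurd hmem (by simp [initStateF, botStore])
  · cases hstepF with
    | @call y x f ae e e' _ ρlam _ _ _ hf =>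
      -- hmem : clo ∈ joinOne σ a₀ (aeval ae cρ σ) a
      set a₀ := alloc x ⟨Exp.letCall y f ae e, cρ, σ, σκ, caκ⟩ with ha₀
      by_cases ha : a = a₀
      · simp only [joinOne, ha, if_pos rfl, Set.mem_union] at hmem
        rcases hmem with hmem | hmem
        · rw [ha]; exact hprec.2 a₀ clo hmem
        · -- new closure from aeval ae cρ σ
          obtain ⟨ψ, hψ, -⟩ := hwf4 _ hc
          have hcH : (Exp.letCall y f ae e, HEnv HA cρ, HKont HA ψ) ∈ rH :=
            hprec.1 _ _ _ _ hc hψ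
          have hH : StepH halloc ⟨Exp.letCall y f ae e, HEnv HA cρ, σH, HKont HA ψ⟩
              ⟨e', upd (HEnv HA ρlam) x
                 (halloc x ⟨Exp.letCall y f ae e, HEnv HA cρ, σH, HKont HA ψ⟩),
               joinOne σH (halloc x ⟨Exp.letCall y f ae e, HEnv HA cρ, σH, HKont HA ψ⟩)
                 (aeval ae (HEnv HA cρ) σH),
               (y, e, HEnv HA cρ) :: HKont HA ψ⟩ :=
            StepH.call (aeval_prec HA hprec.2 f cρ hf)
          have heq : halloc x ⟨Exp.letCall y f ae e, HEnv HA cρ, σH, HKont HA ψ⟩ = HA a₀ :=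
            hAllocEquiv x _ cρ σ σκ caκ σH ψ hprec.2 hψ
          have hin : HClo HA clo ∈
              (⋃ ςH ∈ succSetH halloc e0 (⟨rH, σH⟩ : XiH Var HAddr), ςH.σ (HA a)) := by
            refine Set.mem_biUnion (Set.mem_insert_iff.mpr (Or.inr ⟨_, hcH, hH⟩)) ?_
            show HClo HA clo ∈ joinOne σH _ _ (HA a)
            rw [ha, ← heq]
            simp only [joinOne, if_pos rfl, Set.mem_union]
            exact Or.inr (aeval_prec HA hprec.2 ae cρ hmem)
          have h2 : σH (HA a) =
              ⋃ ςH ∈ succSetH halloc e0 (⟨rH, σH⟩ : XiH Var HAddr), ςH.σ (HA a) :=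
            congrFun hfix.2 (HA a)
          rw [h2]; exact hin
      · simp only [joinOne, if_neg ha, ] at hmem
        exact hprec.2 a clo hmem
    | @ret x ae e _ ρκ _ _ _ aκ' hk =>
      set a₀ := alloc x ⟨Exp.ret ae, cρ, σ, σκ, caκ⟩ with ha₀
      by_cases ha : a = a₀
      · simp only [joinOne, ha, if_pos rfl, Set.mem_union] at hmem
        rcases hmem with hmem | hmem
        · rw [ha]; exact hprec.2 a₀ clo hmem
        · have hne : caκ ≠ ahalt := by
            intro h; exact hwf3 _ (h ▸ hk)
          obtain ⟨eκ', ρκ', -, -, f', ae', hconf, -⟩ := hwf6 caκ x e ρκ aκ' hk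
          obtain ⟨ψ', hψ', -⟩ := hwf4 _ (hwf1.1 hconf)
          have hψ : Implied σκ caκ (((x, e, ρκ), aκ') :: ψ') :=
            Implied.cons hk hψ' hne
          have hcH : (Exp.ret ae, HEnv HA cρ, HKont HA (((x, e, ρκ), aκ') :: ψ')) ∈ rH :=
            hprec.1 _ _ _ _ hc hψ
          have hH : StepH halloc
              ⟨Exp.ret ae, HEnv HA cρ, σH, (x, e, HEnv HA ρκ) :: HKont HA ψ'⟩
              ⟨e, upd (HEnv HA ρκ) x
                 (halloc x ⟨Exp.ret ae, HEnv HA cρ, σH, (x, e, HEnv HA ρκ) :: HKont HA ψ'⟩),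
               joinOne σH
                 (halloc x ⟨Exp.ret ae, HEnv HA cρ, σH, (x, e, HEnv HA ρκ) :: HKont HA ψ'⟩)
                 (aeval ae (HEnv HA cρ) σH),
               HKont HA ψ'⟩ := StepH.ret
          have heq : halloc x ⟨Exp.ret ae, HEnv HA cρ, σH,
              (x, e, HEnv HA ρκ) :: HKont HA ψ'⟩ = HA a₀ :=
            hAllocEquiv x _ cρ σ σκ caκ σH (((x, e, ρκ), aκ') :: ψ') hprec.2 hψ
          have hin : HClo HA clo ∈
              (⋃ ςH ∈ succSetH halloc e0 (⟨rH, σH⟩ : XiH Var HAddr), ςH.σ (HA a)) := by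
            refine Set.mem_biUnion (Set.mem_insert_iff.mpr (Or.inr ⟨_, hcH, hH⟩)) ?_
            show HClo HA clo ∈ joinOne σH _ _ (HA a)
            rw [ha, ← heq]
            simp only [joinOne, if_pos rfl, Set.mem_union]
            exact Or.inr (aeval_prec HA hprec.2 ae cρ hmem)
          have h2 : σH (HA a) =
              ⋃ ςH ∈ succSetH halloc e0 (⟨rH, σH⟩ : XiH Var HAddr), ςH.σ (HA a) :=
            congrFun hfix.2 (HA a)
          rw [h2]; exact hin
      · simp only [joinOne, if_neg ha] at hmem
        exact hprec.2 a clo hmem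

end P4F
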